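/- Let n ≥ 3 and let W_{n+1} be the wheel graph obtained by joining every vertex of a cycle C_n (the rim) to one external central vertex. Then the chromatic curling number of W_{n+1} equals the chromatic curling number of C_n, and the chromatic compound curling number of W_{n+1} equals the chromatic compound curling number of C_n. Explicitly, cn_χ(W_{n+1}) = n/2 and cn^c_χ(W_{n+1}) = n²/4 if n is even, while cn_χ(W_{n+1}) = (n−1)/2 and cn^c_χ(W_{n+1}) = (n−1)²/4 if n is odd. -/

import Mathlib

open SimpleGraph Finset

/-- A proper vertex colouring of `G` with colour set `Fin k`. -/
def IsProperColoring {V : Type*} (G : SimpleGraph V) {k : ℕ} (C : V → Fin k) : Prop :=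
  ∀ ⦃v w⦄, G.Adj v w → C v ≠ C w

/-- The chromatic number of `G`, as a natural number. -/
noncomputable def chi {V : Type*} (G : SimpleGraph V) : ℕ :=
  G.chromaticNumber.toNat

/-- θ(cᵢ): the number of vertices receiving colour `i` under the colouring `C`. -/
def theta {V : Type*} [Fintype V] {k : ℕ} (C : V → Fin k) (i : Fin k) : ℕ :=
  (Finset.univ.filter fun v => C v = i).card

/-- The list of colour class sizes of `C`, sorted in descending order. -/
def classSizesDesc {V : Type*} [Fintype V] {k : ℕ} (C : V → Fin k) : List ℕ :=
  (List.insertionSort (· ≤ ·) (List.ofFn fun i => theta C i)).reverse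

/-- A χ⁻-colouring of `G`: a proper colouring with exactly χ(G) colours such that,
greedily, the colour class of `c₁` is as large as possible, then the colour class of
`c₂` is as large as possible among the remaining vertices, and so on; equivalently,
the descending sequence of colour class sizes is lexicographically maximal among
all proper colourings with χ(G) colours. -/
def IsChiMinusColoring {V : Type*} [Fintype V] (G : SimpleGraph V)
    (C : V → Fin (chi G)) : Prop :=
  IsProperColoring G C ∧
    ∀ C' : V → Fin (chi G), IsProperColoring G C' →
      ¬ List.Lex (· < ·) (classSizesDesc C) (classSizesDesc C')

/-- The wheel graph `W_{n+1}`: a cycle on `Fin n` (the rim, with cyclic successor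
adjacency) joined to an external central vertex `none`. -/
def wheelG (n : ℕ) : SimpleGraph (Option (Fin n)) :=
  SimpleGraph.fromRel (fun a b =>
    match a, b with
    | some v, some w => w.val = (v.val + 1) % n
    | none, some _ => True
    | _, _ => False)

section Aux
variable {m : ℕ}

lemma fin_succ_ne (v : Fin (m + 3)) : v + 1 ≠ v := by
  intro h
  have h1 : (1 : Fin (m+3)) = 0 := by
    have : v + 1 = v + 0 := by simp [h]
    exact add_left_cancel this
  have := congrArg Fin.val h1
  simp [Fin.val_one] at this

lemma cycle_adj_iff {u v : Fin (m + 3)} :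
    (cycleGraph (m+3)).Adj u v ↔ v = u + 1 ∨ u = v + 1 := by
  have h1 : ∀ a b : Fin (m+3), (a - b).val = 1 ↔ a = b + 1 := by
    intro a b
    constructor
    · intro h
      have h2 : a - b = 1 := Fin.ext (by rw [h, Fin.val_one])
      have : a - b + b = 1 + b := by rw [h2]
      simpa [sub_add_cancel, add_comm] using this
    · intro h
      rw [h]
      simp [Fin.val_one]
  rw [cycleGraph_adj', h1, h1]
  tauto

lemma cycle_adj_succ (v : Fin (m + 3)) : (cycleGraph (m+3)).Adj v (v + 1) :=
  cycle_adj_iff.mpr (Or.inl rfl)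

/-- independent set bound -/
lemma two_mul_theta_le {k : ℕ} {C : Fin (m+3) → Fin k}
    (h : IsProperColoring (cycleGraph (m+3)) C) (i : Fin k) : 2 * theta C i ≤ m + 3 := by
  classical
  set S := univ.filter (fun v => C v = i) with hS
  have hdisj : Disjoint S (S.image (· + 1)) := by
    rw [Finset.disjoint_right]
    intro w hw hwS
    simp only [Finset.mem_image] at hw
    obtain ⟨v, hv, rfl⟩ := hw
    simp only [hS, Finset.mem_filter] at hv hwS
    exact h (cycle_adj_succ v) (hv.2.trans hwS.2.symm)
  have hinj : (S.image (· + 1)).card = S.card :=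
    Finset.card_image_of_injective _ (add_left_injective 1)
  have := (Finset.card_union_of_disjoint hdisj) ▸ Finset.card_le_univ (S ∪ S.image (· + 1))
  simp only [Finset.card_univ, Fintype.card_fin] at this
  have hth : theta C i = S.card := rfl
  omega

end Aux
section Aux2
variable {m : ℕ}

/-- An odd cycle admits no proper colouring using only two values. -/
lemma cycle_odd_not_two_valued (hodd : ¬ Even (m + 3))
    {α : Type*} {D : Fin (m + 3) → α}
    (h : ∀ ⦃v w⦄, (cycleGraph (m+3)).Adj v w → D v ≠ D w)
    {x y : α} (hxy : ∀ v, D v = x ∨ D v = y) (h0 : D 0 = x) : False := by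
  have hn : m + 3 ≥ 3 := by omega
  have key : ∀ k (hk : k < m + 3), D ⟨k, hk⟩ = if k % 2 = 0 then x else y := by
    intro k
    induction k with
    | zero => intro hk; simpa using h0
    | succ j ih =>
      intro hk
      have hj := ih (by omega)
      have hadj : (cycleGraph (m+3)).Adj ⟨j, by omega⟩ ⟨j+1, hk⟩ := by
        have : (⟨j+1, hk⟩ : Fin (m+3)) = ⟨j, by omega⟩ + 1 := by
          apply Fin.ext
          simp [Fin.add_def, Fin.val_one, Nat.mod_eq_of_lt hk]
        rw [this]
        exact cycle_adj_succ _
      have hne := h hadj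
      rcases Nat.even_or_odd j with h2 | h2
      · have hj2 : j % 2 = 0 := Nat.even_iff.mp h2
        rw [if_pos hj2] at hj
        rw [if_neg (by omega)]
        rcases hxy ⟨j+1, hk⟩ with h1 | h1
        · exact (hne (hj.trans h1.symm)).elim
        · exact h1
      · have hj2 : j % 2 = 1 := Nat.odd_iff.mp h2
        rw [if_neg (by omega)] at hj
        rw [if_pos (by omega)]
        rcases hxy ⟨j+1, hk⟩ with h1 | h1
        · exact h1
        · exact (hne (hj.trans h1.symm)).elim
  -- now the last vertex
  have hlast := key (m + 2) (by omega)
  rw [Nat.even_iff] at hodd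
  have hm2 : (m + 2) % 2 = 0 := by omega
  rw [if_pos hm2] at hlast
  have hadj : (cycleGraph (m+3)).Adj ⟨m+2, by omega⟩ 0 := by
    have : (0 : Fin (m+3)) = ⟨m+2, by omega⟩ + 1 := by
      apply Fin.ext
      simp [Fin.add_def, Fin.val_one]
    rw [this]
    exact cycle_adj_succ _
  exact h hadj (by rw [hlast, h0])

lemma card_evens_range (n : ℕ) :
    ((Finset.range n).filter fun k => k % 2 = 0).card = (n + 1) / 2 := by
  induction n with
  | zero => simp
  | succ j ih =>
    rw [Finset.range_add_one, Finset.filter_insert]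
    by_cases h : j % 2 = 0
    · rw [if_pos h, Finset.card_insert_of_notMem (by simp)]
      omega
    · rw [if_neg h]
      omega

lemma card_evens (n : ℕ) :
    ((Finset.univ : Finset (Fin n)).filter fun v => v.val % 2 = 0).card = (n + 1) / 2 := by
  rw [← card_evens_range n]
  apply Finset.card_bij (fun v _ => v.val)
  · intro v hv
    simp only [Finset.mem_filter, Finset.mem_range] at *
    exact ⟨v.isLt, hv.2⟩
  · intro a _ b _ hab
    exact Fin.ext hab
  · intro b hb
    simp only [Finset.mem_filter, Finset.mem_range] at hb
    exact ⟨⟨b, hb.1⟩, by simp [hb.2], rfl⟩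

lemma card_odds (n : ℕ) :
    ((Finset.univ : Finset (Fin n)).filter fun v => v.val % 2 = 1).card = n / 2 := by
  have h1 := card_evens n
  have h2 : ((Finset.univ : Finset (Fin n)).filter fun v => v.val % 2 = 1) =
      (Finset.univ.filter fun v : Fin n => ¬ (v.val % 2 = 0)) := by
    apply Finset.filter_congr
    intro v _
    constructor
    · omega
    · omega
  have h3 := Finset.card_filter_add_card_filter_not
    (s := (Finset.univ : Finset (Fin n))) (p := fun v : Fin n => v.val % 2 = 0)
  simp only [Finset.card_univ, Fintype.card_fin] at h3
  rw [h2]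
  omega

/-- sum of class sizes is the number of vertices -/
lemma sum_theta {V : Type*} [Fintype V] [DecidableEq V] {k : ℕ} (C : V → Fin k) :
    ∑ i, theta C i = Fintype.card V := by
  classical
  rw [← Finset.card_univ]
  exact (Finset.card_eq_sum_card_fiberwise (fun x _ => Finset.mem_univ (C x))).symm

lemma theta_option {n k : ℕ} (C : Option (Fin n) → Fin k) (i : Fin k) :
    theta C i = (if C none = i then 1 else 0) + theta (fun v => C (some v)) i := by
  classical
  unfold theta
  rw [Finset.card_filter, Finset.card_filter, Fintype.sum_option]

end Aux2
section Aux3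
variable {m : ℕ}

lemma wheel_adj_some {v w : Fin (m+3)} :
    (wheelG (m+3)).Adj (some v) (some w) ↔ (cycleGraph (m+3)).Adj v w := by
  rw [wheelG, SimpleGraph.fromRel_adj, cycle_adj_iff]
  simp only [ne_eq, Option.some.injEq]
  have hval : ∀ a b : Fin (m+3), b.val = (a.val + 1) % (m+3) ↔ b = a + 1 := by
    intro a b
    rw [Fin.ext_iff, Fin.add_def, Fin.val_one]
  rw [hval, hval]
  constructor
  · rintro ⟨h1, h2⟩; exact h2
  · rintro (h | h)
    · refine ⟨fun he => ?_, Or.inl h⟩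
      subst he; exact fin_succ_ne v h.symm
    · refine ⟨fun he => ?_, Or.inr h⟩
      subst he; exact fin_succ_ne v h.symm

lemma wheel_adj_none (v : Fin (m+3)) : (wheelG (m+3)).Adj none (some v) := by
  rw [wheelG, SimpleGraph.fromRel_adj]
  exact ⟨by simp, Or.inl trivial⟩

lemma wheel_rim_proper {k : ℕ} {C : Option (Fin (m+3)) → Fin k}
    (h : IsProperColoring (wheelG (m+3)) C) :
    IsProperColoring (cycleGraph (m+3)) (fun v => C (some v)) := by
  intro v w hvw
  exact h (wheel_adj_some.mpr hvw)

lemma wheel_rim_ne_center {k : ℕ} {C : Option (Fin (m+3)) → Fin k}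
    (h : IsProperColoring (wheelG (m+3)) C) (v : Fin (m+3)) :
    C (some v) ≠ C none :=
  fun he => h (wheel_adj_none v) he.symm

/-- the centre's colour class is exactly the centre -/
lemma theta_center {k : ℕ} {C : Option (Fin (m+3)) → Fin k}
    (h : IsProperColoring (wheelG (m+3)) C) : theta C (C none) = 1 := by
  rw [theta_option, if_pos rfl]
  have : theta (fun v => C (some v)) (C none) = 0 := by
    unfold theta
    rw [Finset.card_eq_zero, Finset.filter_eq_empty_iff]
    intro v _
    exact wheel_rim_ne_center h v
  omega

lemma theta_noncenter {k : ℕ} {C : Option (Fin (m+3)) → Fin k} {i : Fin k}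
    (hi : C none ≠ i) : theta C i = theta (fun v => C (some v)) i := by
  rw [theta_option, if_neg hi, zero_add]

/-- witness 2-colouring of even cycle -/
def cycCol2 (n : ℕ) : Fin n → Fin 2 := fun v => ⟨v.val % 2, by omega⟩

lemma cycCol2_proper (he : Even (m + 3)) :
    IsProperColoring (cycleGraph (m+3)) (cycCol2 (m+3)) := by
  intro v w hvw
  rw [Nat.even_iff] at he
  have key : ∀ a b : Fin (m+3), b = a + 1 → cycCol2 (m+3) a ≠ cycCol2 (m+3) b := by
    intro a b hab hc
    have hb : b.val = (a.val + 1) % (m+3) := by rw [hab, Fin.add_def, Fin.val_one]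
    have h2 : (a.val + 1) % (m+3) % 2 = (a.val + 1) % 2 :=
      Nat.mod_mod_of_dvd _ (by omega)
    have hc' : a.val % 2 = b.val % 2 := congrArg Fin.val hc
    omega
  rcases cycle_adj_iff.mp hvw with h | h
  · exact key v w h
  · exact (key w v h) ∘ Eq.symm

/-- witness 3-colouring of cycle: parity, with last vertex recoloured -/
def cycCol3 (n : ℕ) : Fin n → Fin 3 := fun v =>
  if v.val = n - 1 then 2 else ⟨v.val % 2, by omega⟩

lemma cycCol3_proper : IsProperColoring (cycleGraph (m+3)) (cycCol3 (m+3)) := by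
  intro v w hvw
  have key : ∀ a b : Fin (m+3), b = a + 1 → cycCol3 (m+3) a ≠ cycCol3 (m+3) b := by
    intro a b hab hc
    have hb : b.val = (a.val + 1) % (m+3) := by rw [hab, Fin.add_def, Fin.val_one]
    have ha3 : a.val < m + 3 := a.isLt
    unfold cycCol3 at hc
    by_cases h1 : a.val = m + 3 - 1
    · have ha1 : a.val + 1 = m + 3 := by omega
      rw [ha1, Nat.mod_self] at hb
      rw [if_pos h1, if_neg (by omega)] at hc
      have := congrArg Fin.val hc
      simp [hb] at this
    · have ha1 : a.val + 1 < m + 3 := by omega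
      rw [Nat.mod_eq_of_lt ha1] at hb
      by_cases h2 : b.val = m + 3 - 1
      · rw [if_neg h1, if_pos h2] at hc
        have := congrArg Fin.val hc
        simp only at this
        omega
      · rw [if_neg h1, if_neg h2] at hc
        have := congrArg Fin.val hc
        simp only at this
        omega
  rcases cycle_adj_iff.mp hvw with h | h
  · exact key v w h
  · exact (key w v h) ∘ Eq.symm

end Aux3
section Chi
variable {m : ℕ}

lemma colorable_of_proper {V : Type*} {G : SimpleGraph V} {k : ℕ} {C : V → Fin k}
    (h : IsProperColoring G C) : G.Colorable k :=
  ⟨SimpleGraph.Coloring.mk C fun {v w} hvw => h hvw⟩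

lemma chi_eq {V : Type*} {G : SimpleGraph V} {k : ℕ} (hk : 1 ≤ k)
    (h1 : G.Colorable k) (h2 : ¬ G.Colorable (k - 1)) : chi G = k := by
  have hub := h1.chromaticNumber_le
  have hlb : ¬ (G.chromaticNumber ≤ (k - 1 : ℕ)) := fun hle =>
    h2 (SimpleGraph.chromaticNumber_le_iff_colorable.mp hle)
  rw [not_le] at hlb
  have h3 : ((k-1 : ℕ) : ℕ∞) + 1 ≤ G.chromaticNumber := Order.add_one_le_of_lt hlb
  obtain ⟨j, rfl⟩ : ∃ j, k = j + 1 := ⟨k - 1, by omega⟩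
  have hcast : ((j+1-1:ℕ):ℕ∞) + 1 = ((j+1:ℕ):ℕ∞) := by
    norm_num
  rw [hcast] at h3
  have hfin : G.chromaticNumber = ((j+1:ℕ):ℕ∞) := le_antisymm hub h3
  rw [chi, hfin, ENat.toNat_coe]

/-- complement pairs in Fin 3 and Fin 4 -/
lemma fin3_compl : ∀ a : Fin 3, ∃ x y : Fin 3, ∀ d : Fin 3, d ≠ a → d = x ∨ d = y := by
  decide

lemma fin4_compl : ∀ a i : Fin 4, a ≠ i →
    ∃ x y : Fin 4, ∀ d : Fin 4, d ≠ a → d ≠ i → d = x ∨ d = y := by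
  decide

lemma cycle_not_colorable_two (hodd : ¬ Even (m+3)) :
    ¬ (cycleGraph (m+3)).Colorable 2 := by
  rintro ⟨D⟩
  have hval : ∀ v : Fin (m+3), D v = D 0 ∨ D v = (D 0 + 1) := by
    intro v
    have : ∀ a b : Fin 2, a = b ∨ a = b + 1 := by decide
    exact this (D v) (D 0)
  exact cycle_odd_not_two_valued hodd (fun v w h => D.valid h) hval rfl

lemma chi_cycle_even (he : Even (m+3)) : chi (cycleGraph (m+3)) = 2 := by
  apply chi_eq (by omega) (colorable_of_proper (cycCol2_proper he))
  rintro ⟨D⟩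
  have h01 : (cycleGraph (m+3)).Adj 0 (0 + 1) := cycle_adj_succ 0
  have hv := D.valid h01
  have l1 := (D 0).isLt
  have l2 := (D (0+1)).isLt
  exact hv (Fin.ext (by omega))

lemma chi_cycle_odd (hodd : ¬ Even (m+3)) : chi (cycleGraph (m+3)) = 3 := by
  apply chi_eq (by omega) (colorable_of_proper cycCol3_proper)
  exact cycle_not_colorable_two hodd

def wheelCol3 (n : ℕ) : Option (Fin n) → Fin 3 := fun o =>
  o.elim 2 (fun v => (cycCol2 n v).castSucc)

def wheelCol4 (n : ℕ) : Option (Fin n) → Fin 4 := fun o =>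
  o.elim 3 (fun v => (cycCol3 n v).castSucc)

lemma wheelCol3_proper (he : Even (m+3)) :
    IsProperColoring (wheelG (m+3)) (wheelCol3 (m+3)) := by
  intro a b hab
  match a, b with
  | none, none => exact absurd hab (wheelG (m+3)).irrefl
  | none, some v =>
    intro h
    have := congrArg Fin.val h
    simp [wheelCol3, cycCol2, Fin.val_two] at this
    omega
  | some v, none =>
    intro h
    have := congrArg Fin.val h
    simp [wheelCol3, cycCol2, Fin.val_two] at this
    omega
  | some v, some w =>
    have := cycCol2_proper he (wheel_adj_some.mp hab)
    simp only [wheelCol3, Option.elim]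
    exact fun h => this (Fin.castSucc_inj.mp h)

lemma wheelCol4_proper : IsProperColoring (wheelG (m+3)) (wheelCol4 (m+3)) := by
  intro a b hab
  match a, b with
  | none, none => exact absurd hab (wheelG (m+3)).irrefl
  | none, some v =>
    intro h
    have := congrArg Fin.val h
    have hlt := (cycCol3 (m+3) v).isLt
    simp [wheelCol4] at this
    omega
  | some v, none =>
    intro h
    have := congrArg Fin.val h
    have hlt := (cycCol3 (m+3) v).isLt
    simp [wheelCol4] at this
    omega
  | some v, some w =>
    have := cycCol3_proper (wheel_adj_some.mp hab)
    simp only [wheelCol4, Option.elim]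
    exact fun h => this (Fin.castSucc_inj.mp h)

lemma chi_wheel_even (he : Even (m+3)) : chi (wheelG (m+3)) = 3 := by
  apply chi_eq (by omega) (colorable_of_proper (wheelCol3_proper he))
  rintro ⟨D⟩
  have h1 := D.valid (wheel_adj_none (0 : Fin (m+3)))
  have h2 := D.valid (wheel_adj_none (0 + 1 : Fin (m+3)))
  have h3 := D.valid (wheel_adj_some.mpr (cycle_adj_succ (0 : Fin (m+3))))
  have l1 := (D none).isLt
  have l2 := (D (some 0)).isLt
  have l3 := (D (some (0+1))).isLt
  rw [Ne, Fin.ext_iff] at h1 h2 h3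
  omega

lemma chi_wheel_odd (hodd : ¬ Even (m+3)) : chi (wheelG (m+3)) = 4 := by
  apply chi_eq (by omega) (colorable_of_proper wheelCol4_proper)
  rintro ⟨D⟩
  obtain ⟨x, y, hxy⟩ := fin3_compl (D none)
  have hne : ∀ v, D (some v) ≠ D none := fun v h => D.valid (wheel_adj_none v) h.symm
  have hprop : ∀ ⦃v w : Fin (m+3)⦄, (cycleGraph (m+3)).Adj v w →
      D (some v) ≠ D (some w) := fun v w h => D.valid (wheel_adj_some.mpr h)
  rcases hxy (D (some 0)) (hne 0) with h0 | h0
  · exact cycle_odd_not_two_valued hodd hprop (fun v => hxy _ (hne v)) h0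
  · exact cycle_odd_not_two_valued hodd hprop
      (fun v => (hxy _ (hne v)).symm) h0

end Chi
section Lists

lemma list_len_four {α : Type*} {L : List α} (h : L.length = 4) :
    ∃ a b c d, L = [a, b, c, d] := by
  rcases L with _ | ⟨a, t⟩
  · simp at h
  · have ht : t.length = 3 := by simpa using h
    obtain ⟨b, c, d, rfl⟩ := List.length_eq_three.mp ht
    exact ⟨a, b, c, d, rfl⟩

lemma classSizesDesc_perm {V : Type*} [Fintype V] {k : ℕ} (C : V → Fin k) :
    (classSizesDesc C).Perm (List.ofFn (theta C)) :=
  (List.reverse_perm _).trans (List.perm_insertionSort _ _)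

lemma classSizesDesc_sorted {V : Type*} [Fintype V] {k : ℕ} (C : V → Fin k) :
    (classSizesDesc C).Pairwise (fun a b => b ≤ a) :=
  List.pairwise_reverse.mpr (List.pairwise_insertionSort _ _)

lemma classSizesDesc_length {V : Type*} [Fintype V] {k : ℕ} (C : V → Fin k) :
    (classSizesDesc C).length = k := by
  simp [classSizesDesc]

lemma classSizesDesc_sum {V : Type*} [Fintype V] [DecidableEq V] {k : ℕ} (C : V → Fin k) :
    (classSizesDesc C).sum = Fintype.card V := by
  rw [(classSizesDesc_perm C).sum_eq, List.sum_ofFn, sum_theta]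

lemma classSizesDesc_prod {V : Type*} [Fintype V] {k : ℕ} (C : V → Fin k) :
    (classSizesDesc C).prod = ∏ i, theta C i := by
  rw [(classSizesDesc_perm C).prod_eq, List.prod_ofFn]

lemma classSizesDesc_mem {V : Type*} [Fintype V] {k : ℕ} {C : V → Fin k} {x : ℕ}
    (h : x ∈ classSizesDesc C) : ∃ i, theta C i = x := by
  rw [(classSizesDesc_perm C).mem_iff, List.mem_ofFn] at h
  obtain ⟨i, hi⟩ := h
  exact ⟨i, hi⟩

lemma classSizesDesc_eq {V : Type*} [Fintype V] {k : ℕ} (C : V → Fin k) {l' : List ℕ}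
    (hp : (List.ofFn (theta C)).Perm l') (hs : l'.Pairwise (· ≤ ·)) :
    classSizesDesc C = l'.reverse := by
  unfold classSizesDesc
  congr 1
  exact List.Perm.eq_of_pairwise' (List.pairwise_insertionSort _ _) hs
    ((List.perm_insertionSort _ _).trans hp)

end Lists

section WitnessTheta
variable {m : ℕ}

lemma cycCol3_eq (v : Fin (m+3)) :
    cycCol3 (m+3) v = if v.val = m + 2 then 2 else ⟨v.val % 2, by omega⟩ := rfl

lemma theta_cycCol3 (hodd : ¬ Even (m+3)) :
    theta (cycCol3 (m+3)) 0 = (m+2)/2 ∧ theta (cycCol3 (m+3)) 1 = (m+2)/2 ∧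
      theta (cycCol3 (m+3)) 2 = 1 := by
  rw [Nat.even_iff] at hodd
  have hme : m % 2 = 0 := by omega
  set last : Fin (m+3) := ⟨m+2, by omega⟩ with hlast
  have hiff0 : ∀ v : Fin (m+3), cycCol3 (m+3) v = 0 ↔ (v.val % 2 = 0 ∧ v.val ≠ m+2) := by
    intro v
    rw [cycCol3_eq]
    by_cases hv : v.val = m+2
    · rw [if_pos hv]
      constructor
      · intro h; exact absurd h (by decide)
      · rintro ⟨-, h⟩; exact absurd hv h
    · rw [if_neg hv]
      constructor
      · intro h; exact ⟨congrArg Fin.val h, hv⟩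
      · rintro ⟨h, -⟩; exact Fin.ext h
  have hiff1 : ∀ v : Fin (m+3), cycCol3 (m+3) v = 1 ↔ v.val % 2 = 1 := by
    intro v
    rw [cycCol3_eq]
    by_cases hv : v.val = m+2
    · rw [if_pos hv]
      constructor
      · intro h; exact absurd h (by decide)
      · intro h; exfalso; omega
    · rw [if_neg hv]
      constructor
      · intro h; exact congrArg Fin.val h
      · intro h; exact Fin.ext h
  have hiff2 : ∀ v : Fin (m+3), cycCol3 (m+3) v = 2 ↔ v = last := by
    intro v
    rw [cycCol3_eq]
    by_cases hv : v.val = m+2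
    · rw [if_pos hv]
      have hvl : v = last := Fin.ext hv
      simp [hvl]
    · rw [if_neg hv]
      constructor
      · intro h
        have h2 : v.val % 2 = 2 := congrArg Fin.val h
        exfalso; omega
      · intro h
        exact absurd (congrArg Fin.val h) hv
  refine ⟨?_, ?_, ?_⟩
  · have h1 : (Finset.univ.filter fun v => cycCol3 (m+3) v = 0) =
        (Finset.univ.filter fun v : Fin (m+3) => v.val % 2 = 0).erase last := by
      ext v
      simp only [Finset.mem_erase, Finset.mem_filter, Finset.mem_univ, true_and]
      rw [hiff0 v]
      constructor
      · rintro ⟨h2, hne⟩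
        exact ⟨fun he => hne (congrArg Fin.val he), h2⟩
      · rintro ⟨hne, h2⟩
        exact ⟨h2, fun he => hne (Fin.ext he)⟩
    have hmem : last ∈ (Finset.univ.filter fun v : Fin (m+3) => v.val % 2 = 0) := by
      refine Finset.mem_filter.mpr ⟨Finset.mem_univ _, ?_⟩
      have h : last.val = m + 2 := rfl
      omega
    unfold theta
    rw [h1, Finset.card_erase_of_mem hmem, card_evens]
    omega
  · have h1 : (Finset.univ.filter fun v => cycCol3 (m+3) v = 1) =
        (Finset.univ.filter fun v : Fin (m+3) => v.val % 2 = 1) := by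
      ext v
      simp only [Finset.mem_filter, Finset.mem_univ, true_and, hiff1 v]
    unfold theta
    rw [h1, card_odds]
    omega
  · have h1 : (Finset.univ.filter fun v => cycCol3 (m+3) v = 2) = {last} := by
      ext v
      simp only [Finset.mem_filter, Finset.mem_univ, true_and, Finset.mem_singleton, hiff2 v]
    unfold theta
    rw [h1, Finset.card_singleton]

lemma classSizesDesc_cycCol3 (hodd : ¬ Even (m+3)) :
    classSizesDesc (cycCol3 (m+3)) = [(m+2)/2, (m+2)/2, 1] := by
  obtain ⟨h0, h1, h2⟩ := theta_cycCol3 hodd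
  have hM : 1 ≤ (m+2)/2 := by omega
  set M := (m+2)/2
  have hofn : List.ofFn (theta (cycCol3 (m+3))) = [M, M, 1] := by
    have : List.ofFn (theta (cycCol3 (m+3))) =
        [theta (cycCol3 (m+3)) 0, theta (cycCol3 (m+3)) 1, theta (cycCol3 (m+3)) 2] := by
      simp [List.ofFn_succ]
    rw [this, h0, h1, h2]
  have hperm : ([M, M, 1] : List ℕ).Perm [1, M, M] :=
    (List.Perm.cons M (List.Perm.swap 1 M [])).trans (List.Perm.swap 1 M [M])
  have : classSizesDesc (cycCol3 (m+3)) = [1, M, M].reverse := by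
    apply classSizesDesc_eq
    · rw [hofn]; exact hperm
    · simp [List.pairwise_cons]
      try omega
  simpa using this

end WitnessTheta
section WheelWitness
variable {m : ℕ}

lemma rim_theta (j : Fin 3) :
    theta (fun v : Fin (m+3) => (cycCol3 (m+3) v).castSucc) j.castSucc
      = theta (cycCol3 (m+3)) j := by
  unfold theta
  congr 1
  ext v
  simp [Fin.castSucc_inj]

lemma rim_theta_top :
    theta (fun v : Fin (m+3) => (cycCol3 (m+3) v).castSucc) 3 = 0 := by
  unfold theta
  rw [Finset.card_eq_zero, Finset.filter_eq_empty_iff]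
  intro v _
  intro h
  have h2 := congrArg Fin.val h
  have h3 := (cycCol3 (m+3) v).isLt
  have h4 : ((cycCol3 (m+3) v).castSucc).val = (cycCol3 (m+3) v).val := rfl
  rw [h4] at h2
  have h5 : ((3 : Fin 4)).val = 3 := rfl
  rw [h5] at h2
  omega

lemma theta_wheelCol4 (hodd : ¬ Even (m+3)) :
    theta (wheelCol4 (m+3)) 0 = (m+2)/2 ∧ theta (wheelCol4 (m+3)) 1 = (m+2)/2 ∧
      theta (wheelCol4 (m+3)) 2 = 1 ∧ theta (wheelCol4 (m+3)) 3 = 1 := by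
  obtain ⟨h0, h1, h2⟩ := theta_cycCol3 hodd
  have hrim : ∀ i : Fin 4, theta (wheelCol4 (m+3)) i =
      (if (3 : Fin 4) = i then 1 else 0) +
        theta (fun v : Fin (m+3) => (cycCol3 (m+3) v).castSucc) i := by
    intro i
    exact theta_option (wheelCol4 (m+3)) i
  refine ⟨?_, ?_, ?_, ?_⟩
  · rw [hrim 0, if_neg (by decide),
      show (0 : Fin 4) = (0 : Fin 3).castSucc from rfl, rim_theta, h0, Nat.zero_add]
  · rw [hrim 1, if_neg (by decide),
      show (1 : Fin 4) = (1 : Fin 3).castSucc from rfl, rim_theta, h1, Nat.zero_add]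
  · rw [hrim 2, if_neg (by decide),
      show (2 : Fin 4) = (2 : Fin 3).castSucc from rfl, rim_theta, h2, Nat.zero_add]
  · rw [hrim 3, if_pos rfl, rim_theta_top]

lemma classSizesDesc_wheelCol4 (hodd : ¬ Even (m+3)) :
    classSizesDesc (wheelCol4 (m+3)) = [(m+2)/2, (m+2)/2, 1, 1] := by
  obtain ⟨h0, h1, h2, h3⟩ := theta_wheelCol4 hodd
  have hM : 1 ≤ (m+2)/2 := by omega
  set M := (m+2)/2
  have hofn : List.ofFn (theta (wheelCol4 (m+3))) = [M, M, 1, 1] := by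
    have : List.ofFn (theta (wheelCol4 (m+3))) =
        [theta (wheelCol4 (m+3)) 0, theta (wheelCol4 (m+3)) 1,
         theta (wheelCol4 (m+3)) 2, theta (wheelCol4 (m+3)) 3] := by
      simp [List.ofFn_succ]
      try rfl
    rw [this, h0, h1, h2, h3]
  have s1 : ([M, 1, 1] : List ℕ).Perm [1, 1, M] :=
    (List.Perm.swap 1 M [1]).trans (List.Perm.cons 1 (List.Perm.swap 1 M []))
  have hperm : ([M, M, 1, 1] : List ℕ).Perm [1, 1, M, M] :=
    (List.Perm.cons M s1).trans
      ((List.Perm.swap 1 M [1, M]).trans (List.Perm.cons 1 (List.Perm.swap 1 M [M])))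
  have : classSizesDesc (wheelCol4 (m+3)) = [1, 1, M, M].reverse := by
    apply classSizesDesc_eq
    · rw [hofn]; exact hperm
    · simp [List.pairwise_cons]
      try omega
  simpa using this

/-- every colour class of a proper 4-colouring of the odd wheel is nonempty -/
lemma wheel_theta_pos (hodd : ¬ Even (m+3)) {C : Option (Fin (m+3)) → Fin 4}
    (h : IsProperColoring (wheelG (m+3)) C) (i : Fin 4) : 1 ≤ theta C i := by
  by_contra hcon
  have hz : theta C i = 0 := by omega
  have hempty : ∀ a, C a ≠ i := by
    intro a
    have := Finset.filter_eq_empty_iff.mp (Finset.card_eq_zero.mp hz) (Finset.mem_univ a)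
    exact this
  have hne : ∀ v, C (some v) ≠ C none := wheel_rim_ne_center h
  have hprop : ∀ ⦃v w : Fin (m+3)⦄, (cycleGraph (m+3)).Adj v w →
      C (some v) ≠ C (some w) := wheel_rim_proper h
  obtain ⟨x, y, hxy⟩ := fin4_compl (C none) i (hempty none)
  rcases hxy (C (some 0)) (hne 0) (hempty (some 0)) with h0 | h0
  · exact cycle_odd_not_two_valued hodd hprop
      (fun v => hxy _ (hne v) (hempty (some v))) h0
  · exact cycle_odd_not_two_valued hodd hprop
      (fun v => (hxy _ (hne v) (hempty (some v))).symm) h0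

end WheelWitness
section MainCases
variable {m : ℕ}

lemma cycle_even_main (he : Even (m+3)) {C : Fin (m+3) → Fin 2}
    (h : IsProperColoring (cycleGraph (m+3)) C) :
    Finset.univ.sup (theta C) = (m+3)/2 ∧ ∏ i, theta C i = ((m+3)/2)^2 := by
  rw [Nat.even_iff] at he
  have hsum : theta C 0 + theta C 1 = m + 3 := by
    have := sum_theta C
    rwa [Fin.sum_univ_two, Fintype.card_fin] at this
  have hb0 := two_mul_theta_le h 0
  have hb1 := two_mul_theta_le h 1
  have htheta : ∀ i : Fin 2, theta C i = (m+3)/2 := by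
    intro i
    fin_cases i
    · show theta C 0 = (m+3)/2; omega
    · show theta C 1 = (m+3)/2; omega
  constructor
  · apply le_antisymm
    · exact Finset.sup_le fun i _ => (htheta i).le
    · exact (htheta 0) ▸ Finset.le_sup (Finset.mem_univ (0 : Fin 2))
  · rw [Fin.prod_univ_two, htheta 0, htheta 1, sq]

lemma fin3_sum_shift (g : Fin 3 → ℕ) (a : Fin 3) :
    ∑ i, g i = g a + g (a+1) + g (a+2) := by
  have h1 : (Finset.univ : Finset (Fin 3)) = {a, a+1, a+2} := by fin_cases a <;> decide
  rw [h1, Finset.sum_insert (by fin_cases a <;> decide),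
    Finset.sum_insert (by fin_cases a <;> decide), Finset.sum_singleton]
  ring

lemma fin3_prod_shift (g : Fin 3 → ℕ) (a : Fin 3) :
    ∏ i, g i = g a * g (a+1) * g (a+2) := by
  have h1 : (Finset.univ : Finset (Fin 3)) = {a, a+1, a+2} := by fin_cases a <;> decide
  rw [h1, Finset.prod_insert (by fin_cases a <;> decide),
    Finset.prod_insert (by fin_cases a <;> decide), Finset.prod_singleton]
  ring

lemma wheel_even_main (he : Even (m+3)) {C : Option (Fin (m+3)) → Fin 3}
    (h : IsProperColoring (wheelG (m+3)) C) :
    Finset.univ.sup (theta C) = (m+3)/2 ∧ ∏ i, theta C i = ((m+3)/2)^2 := by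
  rw [Nat.even_iff] at he
  have hctr : theta C (C none) = 1 := theta_center h
  have hne : ∀ a : Fin 3, a + 1 ≠ a ∧ a + 2 ≠ a := by decide
  have hb : ∀ i : Fin 3, i ≠ C none → 2 * theta C i ≤ m + 3 := by
    intro i hi
    rw [theta_noncenter (Ne.symm hi)]
    exact two_mul_theta_le (wheel_rim_proper h) i
  have hsum : theta C (C none) + theta C (C none + 1) + theta C (C none + 2) = m + 4 := by
    rw [← fin3_sum_shift (theta C) (C none), sum_theta]
    simp
  have hb1 := hb (C none + 1) (hne (C none)).1
  have hb2 := hb (C none + 2) (hne (C none)).2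
  have ht1 : theta C (C none + 1) = (m+3)/2 := by omega
  have ht2 : theta C (C none + 2) = (m+3)/2 := by omega
  constructor
  · apply le_antisymm
    · apply Finset.sup_le
      intro i _
      by_cases hi : i = C none
      · rw [hi, hctr]; omega
      · have := hb i hi; omega
    · exact ht1 ▸ Finset.le_sup (Finset.mem_univ (C none + 1))
  · rw [fin3_prod_shift (theta C) (C none), hctr, ht1, ht2, sq]
    ring

lemma cycle_odd_main (hodd : ¬ Even (m+3)) {C : Fin (m+3) → Fin 3}
    (h : IsProperColoring (cycleGraph (m+3)) C)
    (hmax : ¬ List.Lex (· < ·) (classSizesDesc C) (classSizesDesc (cycCol3 (m+3)))) :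
    Finset.univ.sup (theta C) = (m+2)/2 ∧ ∏ i, theta C i = ((m+2)/2)^2 := by
  rw [classSizesDesc_cycCol3 hodd] at hmax
  have hodd' := hodd
  rw [Nat.even_iff] at hodd'
  set M := (m+2)/2 with hMdef
  obtain ⟨a, b, c, hL⟩ := List.length_eq_three.mp (classSizesDesc_length C)
  have hsum : a + b + c = m + 3 := by
    have := classSizesDesc_sum C
    rw [hL] at this
    simp at this
    omega
  have hmem : ∀ x ∈ classSizesDesc C, x ≤ M := by
    intro x hx
    obtain ⟨i, hi⟩ := classSizesDesc_mem hx
    have := two_mul_theta_le h i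
    omega
  have ha : a ≤ M := hmem a (by rw [hL]; simp)
  have hbM : b ≤ M := hmem b (by rw [hL]; simp)
  rw [hL] at hmax
  have haM : a = M := by
    by_contra h'
    exact hmax (List.Lex.rel (by omega))
  subst haM
  have hbMe : b = M := by
    by_contra h'
    exact hmax (List.Lex.cons (List.Lex.rel (by omega)))
  subst hbMe
  have hc : c = 1 := by omega
  subst hc
  constructor
  · apply le_antisymm
    · apply Finset.sup_le
      intro i _
      have := two_mul_theta_le h i
      omega
    · obtain ⟨i, hi⟩ := classSizesDesc_mem (x := M) (by rw [hL]; simp)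
      exact hi ▸ Finset.le_sup (Finset.mem_univ i)
  · have := classSizesDesc_prod C
    rw [hL] at this
    rw [← this]
    simp [sq]

lemma wheel_odd_main (hodd : ¬ Even (m+3)) {C : Option (Fin (m+3)) → Fin 4}
    (h : IsProperColoring (wheelG (m+3)) C)
    (hmax : ¬ List.Lex (· < ·) (classSizesDesc C) (classSizesDesc (wheelCol4 (m+3)))) :
    Finset.univ.sup (theta C) = (m+2)/2 ∧ ∏ i, theta C i = ((m+2)/2)^2 := by
  rw [classSizesDesc_wheelCol4 hodd] at hmax
  have hodd' := hodd
  rw [Nat.even_iff] at hodd'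
  set M := (m+2)/2 with hMdef
  obtain ⟨a, b, c, d, hL⟩ := list_len_four (classSizesDesc_length C)
  have hsum : a + b + c + d = m + 4 := by
    have := classSizesDesc_sum C
    rw [hL] at this
    simp only [Fintype.card_option, Fintype.card_fin] at this
    simp at this
    omega
  have hbound : ∀ i : Fin 4, theta C i ≤ M := by
    intro i
    by_cases hi : i = C none
    · rw [hi, theta_center h]; omega
    · rw [theta_noncenter (Ne.symm hi)]
      have := two_mul_theta_le (wheel_rim_proper h) i
      omega
  have hmem : ∀ x ∈ classSizesDesc C, x ≤ M := by
    intro x hx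
    obtain ⟨i, hi⟩ := classSizesDesc_mem hx
    exact hi ▸ hbound i
  have hpos : ∀ x ∈ classSizesDesc C, 1 ≤ x := by
    intro x hx
    obtain ⟨i, hi⟩ := classSizesDesc_mem hx
    exact hi ▸ wheel_theta_pos hodd h i
  have ha : a ≤ M := hmem a (by rw [hL]; simp)
  have hb : b ≤ M := hmem b (by rw [hL]; simp)
  have hcd : 1 ≤ d := hpos d (by rw [hL]; simp)
  have hcc : 1 ≤ c := hpos c (by rw [hL]; simp)
  have hsort : d ≤ c := by
    have hp := classSizesDesc_sorted C
    rw [hL] at hp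
    simp only [List.pairwise_cons] at hp
    exact hp.2.2.1 d (by simp)
  rw [hL] at hmax
  have haM : a = M := by
    by_contra h'
    exact hmax (List.Lex.rel (by omega))
  subst haM
  have hbMe : b = M := by
    by_contra h'
    exact hmax (List.Lex.cons (List.Lex.rel (by omega)))
  subst hbMe
  have hc1 : c = 1 := by omega
  have hd1 : d = 1 := by omega
  subst hc1; subst hd1
  constructor
  · apply le_antisymm
    · exact Finset.sup_le fun i _ => hbound i
    · obtain ⟨i, hi⟩ := classSizesDesc_mem (x := M) (by rw [hL]; simp)
      exact hi ▸ Finset.le_sup (Finset.mem_univ i)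
  · have := classSizesDesc_prod C
    rw [hL] at this
    rw [← this]
    simp [sq]

end MainCases

theorem wheelGraph_chromaticCurlingNumbers (n : ℕ) (hn : 3 ≤ n)
    (C : Option (Fin n) → Fin (chi (wheelG n))) (hC : IsChiMinusColoring (wheelG n) C)
    (C' : Fin n → Fin (chi (cycleGraph n))) (hC' : IsChiMinusColoring (cycleGraph n) C') :
    (Finset.univ.sup (theta C) = Finset.univ.sup (theta C') ∧
      ∏ i, theta C i = ∏ i, theta C' i) ∧
    Finset.univ.sup (theta C) = (if Even n then n / 2 else (n - 1) / 2) ∧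
    ∏ i, theta C i = (if Even n then n ^ 2 / 4 else (n - 1) ^ 2 / 4) := by
  obtain ⟨hC1, hC2⟩ := hC
  obtain ⟨hC'1, hC'2⟩ := hC'
  obtain ⟨m, rfl⟩ : ∃ m, n = m + 3 := ⟨n - 3, by omega⟩
  by_cases he : Even (m+3)
  · have hchiW := chi_wheel_even he
    have hchiC := chi_cycle_even he
    revert C C'
    rw [hchiW, hchiC]
    intro C C' hC1 hC2 hC'1 hC'2
    obtain ⟨hs, hp⟩ := wheel_even_main he hC1
    obtain ⟨hs', hp'⟩ := cycle_even_main he hC'1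
    have hm2 : (m + 3) % 2 = 0 := Nat.even_iff.mp he
    obtain ⟨t, ht⟩ : ∃ t, m + 3 = 2 * t := ⟨(m+3)/2, by omega⟩
    refine ⟨⟨by rw [hs, hs'], by rw [hp, hp']⟩, ?_, ?_⟩
    · rw [if_pos he, hs]
    · rw [if_pos he, hp, ht]
      have e1 : (2*t)/2 = t := by omega
      have e2 : (2*t)^2 = 4 * t^2 := by ring
      rw [e1, e2, Nat.mul_div_cancel_left _ (by norm_num)]
  · have hchiW := chi_wheel_odd he
    have hchiC := chi_cycle_odd he
    revert C C'
    rw [hchiW, hchiC]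
    intro C C' hC1 hC2 hC'1 hC'2
    have hmaxW := hC2 (wheelCol4 (m+3)) wheelCol4_proper
    have hmaxC := hC'2 (cycCol3 (m+3)) cycCol3_proper
    obtain ⟨hs, hp⟩ := wheel_odd_main he hC1 hmaxW
    obtain ⟨hs', hp'⟩ := cycle_odd_main he hC'1 hmaxC
    have hm2 : (m + 3) % 2 = 1 := Nat.odd_iff.mp (Nat.not_even_iff_odd.mp he)
    obtain ⟨t, ht⟩ : ∃ t, m + 2 = 2 * t := ⟨(m+2)/2, by omega⟩
    have hsub : m + 3 - 1 = m + 2 := by omega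
    refine ⟨⟨by rw [hs, hs'], by rw [hp, hp']⟩, ?_, ?_⟩
    · rw [if_neg he, hs, hsub]
    · rw [if_neg he, hp, hsub, ht]
      have e1 : (2*t)/2 = t := by omega
      have e2 : (2*t)^2 = 4 * t^2 := by ring
      rw [e1, e2, Nat.mul_div_cancel_left _ (by norm_num)]
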